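/- For every integer n ≥ 1 and every t ∈ ℝ, ∑_{k=0}^n C_k^n · t^k = A_n(t); that is, the two expressions ∑_{k=0}^n cos((n−k)π/2)·k^n / ((n−k)!!·(n+k)!!) · t^k and ((−1)^n/n!) · ∑_{k=0}^{⌊n/2⌋} (−1)^k · binom(n,k) · (k − n/2)^n · t^{n−2k} are equal. -/

import Mathlib

/-- The polynomial `A_n(t) = ((−1)^n/n!) ∑_{k=0}^{⌊n/2⌋} (−1)^k C(n,k) (k − n/2)^n t^{n−2k}`,
with the convention `A_0 ≡ 0` (negative indices are handled by truncated subtraction,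
which is harmless since `A_0 ≡ 0`). -/
noncomputable def A (n : ℕ) (t : ℝ) : ℝ :=
  if n = 0 then 0 else
    ((-1 : ℝ) ^ n / Nat.factorial n) *
      ∑ k ∈ Finset.range (n / 2 + 1),
        (-1 : ℝ) ^ k * (Nat.choose n k) * ((k : ℝ) - n / 2) ^ n * t ^ (n - 2 * k)


open Nat in
/-- `C_k^n = cos((n−k)π/2) kⁿ / ((n−k)‼ (n+k)‼)` for `0 ≤ k ≤ n`. -/
noncomputable def Ccoef (n k : ℕ) : ℝ :=
  Real.cos (((n - k : ℕ) : ℝ) * Real.pi / 2) * (k : ℝ) ^ n /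
    (((n - k)‼ : ℝ) * ((n + k)‼ : ℝ))

/-!
The cosine kills every term with `n - k` odd and equals `(-1)^j` at `n - k = 2j`. Splitting the
double factorials as `(2j)‼ = 2^j j!` and `(2(n-j))‼ = 2^(n-j) (n-j)!` turns `C_{n-2j}^n t^{n-2j}`
into the `j`-th term of `A_n(t)`, since `(j - n/2)^n = (-1)^n ((n - 2j)/2)^n` cancels the sign
`(-1)^n` and `binom(n, j) / n! = 1 / (j! (n-j)!)`.
-/

open Finset Real Nat

lemma Real.cos_two_mul_nat_mul_pi_div_two (j : ℕ) :
    cos (((2 * j : ℕ) : ℝ) * π / 2) = (-1) ^ j := by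
  rw [show ((2 * j : ℕ) : ℝ) * π / 2 = j * π by push_cast; ring, cos_nat_mul_pi]

lemma Real.cos_two_mul_nat_add_one_mul_pi_div_two (j : ℕ) :
    cos (((2 * j + 1 : ℕ) : ℝ) * π / 2) = 0 := by
  rw [show ((2 * j + 1 : ℕ) : ℝ) * π / 2 = j * π + π / 2 by push_cast; ring, cos_add]
  simp [sin_nat_mul_pi]

lemma Finset.sum_range_succ_eq_sum_sub_two_mul {M : Type*} [AddCommMonoid M] (n : ℕ)
    (f : ℕ → M) (hf : ∀ k ≤ n, Odd (n - k) → f k = 0) :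
    ∑ k ∈ range (n + 1), f k = ∑ j ∈ range (n / 2 + 1), f (n - 2 * j) := by
  have hinj : Set.InjOn (fun j => n - 2 * j) (range (n / 2 + 1)) := by
    intro a ha b hb hab
    simp only [coe_range, Set.mem_Iio] at ha hb
    simp only at hab
    omega
  rw [← sum_image hinj]
  refine (sum_subset ?_ fun k hk hk' => hf k ?_ ?_).symm
  · intro k hk
    simp only [mem_image, mem_range] at hk ⊢
    omega
  · simp only [mem_range] at hk
    omega
  · rw [Nat.odd_iff]
    simp only [mem_image, mem_range, not_exists, not_and] at hk hk'
    by_contra h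
    exact hk' ((n - k) / 2) (by omega) (by omega)

lemma Ccoef_eq_zero_of_odd {n k : ℕ} (h : Odd (n - k)) : Ccoef n k = 0 := by
  obtain ⟨j, hj⟩ := h
  rw [Ccoef, hj, cos_two_mul_nat_add_one_mul_pi_div_two, zero_mul, zero_div]

lemma Ccoef_sub_two_mul {n j : ℕ} (h : 2 * j ≤ n) :
    Ccoef n (n - 2 * j) =
      (-1) ^ j * ((n - 2 * j : ℕ) : ℝ) ^ n / (2 ^ n * j ! * (n - j)!) := by
  rw [Ccoef, show n - (n - 2 * j) = 2 * j by omega, show n + (n - 2 * j) = 2 * (n - j) by omega,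
    cos_two_mul_nat_mul_pi_div_two, Nat.doubleFactorial_two_mul, Nat.doubleFactorial_two_mul]
  have h2 : (2 : ℝ) ^ n = 2 ^ j * 2 ^ (n - j) := by rw [← pow_add]; congr 1; omega
  push_cast
  rw [h2]
  ring

lemma A_summand_eq {n j : ℕ} (h : 2 * j ≤ n) :
    (-1) ^ n / n ! * ((-1) ^ j * n.choose j * ((j : ℝ) - n / 2) ^ n) =
      (-1) ^ j * ((n - 2 * j : ℕ) : ℝ) ^ n / (2 ^ n * j ! * (n - j)!) := by
  have hhalf : (j : ℝ) - n / 2 = -1 * ((n - 2 * j : ℕ) / 2) := by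
    rw [Nat.cast_sub h]; push_cast; ring
  rw [Nat.cast_choose ℝ (by omega : j ≤ n), hhalf, mul_pow, div_pow]
  field_simp
  rw [← pow_mul, mul_comm n 2, pow_mul, neg_one_sq, one_pow, one_mul]

/-- For every `n ≥ 1` and `t ∈ ℝ`, `∑_{k=0}^n C_k^n t^k = A_n(t)`. -/
theorem C_sum_eq_A (n : ℕ) (hn : 1 ≤ n) (t : ℝ) :
    ∑ k ∈ Finset.range (n + 1), Ccoef n k * t ^ k = A n t := by
  rw [A, if_neg (by omega), mul_sum,
    sum_range_succ_eq_sum_sub_two_mul n _ fun k _ hk => by rw [Ccoef_eq_zero_of_odd hk, zero_mul]]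
  refine sum_congr rfl fun j hj => ?_
  have h2j : 2 * j ≤ n := by rw [mem_range] at hj; omega
  rw [Ccoef_sub_two_mul h2j, ← A_summand_eq h2j]
  ring
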